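/- Let α be a finite type, let D, D_C be distributions on α with d_H(D, D_C) ≤ η for some η ∈ (0, 1], let δ ∈ (0, 1), and let q = (1/2)·(1 + (1 − d_H(D, D_C)²)²). Let N be a natural number with (N : ℝ) ≥ (2 / η^4) * Real.log (2 / δ), and let μ be the product measure on Fin N → Bool of N copies of the Bernoulli measure on Bool with probability q of true. Then μ {ω | ((Finset.univ.filter (fun i => ω i = true)).card : ℝ) / N ≥ 1 − 2·η²} ≥ 1 − δ. (Probabilistic core of the completeness of Theorem 4.4: the honest prover, who forwards the state purifying D with d_H(D, D_C) ≤ η, passes the verifier's acceptance test with probability at least 1 − δ.) -/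

import Mathlib

open MeasureTheory

/-- The Hellinger distance between two distributions on a finite type:
`d_H(P,Q) = (1/√2)·√(∑ x, (√(P x) − √(Q x))²)`. -/
noncomputable def hellingerDist {α : Type*} [Fintype α] (P Q : α → ℝ) : ℝ :=
  (1 / Real.sqrt 2) * Real.sqrt (∑ x, (Real.sqrt (P x) - Real.sqrt (Q x)) ^ 2)

/-- The Bernoulli measure on `Bool` with probability `p` of `true`. -/
noncomputable def bernoulliMeasure (p : ℝ) : Measure Bool :=
  ENNReal.ofReal p • Measure.dirac true + ENNReal.ofReal (1 - p) • Measure.dirac false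

instance (p : ℝ) : IsFiniteMeasure (bernoulliMeasure p) := by
  constructor
  simp only [bernoulliMeasure, Measure.add_apply, Measure.smul_apply, smul_eq_mul,
    measure_univ, mul_one]
  exact ENNReal.add_lt_top.mpr ⟨ENNReal.ofReal_lt_top, ENNReal.ofReal_lt_top⟩

/-!
Each round of the verifier accepts with probability `q = (1 + (1 - d²)²) / 2 ≥ 1 - d² ≥ 1 - η²`,
so the acceptance threshold `1 - 2η²` lies at least `η²` below the mean of the empirical
frequency. Hoeffding's inequality bounds the probability of such a downward deviation over
`N` independent rounds by `exp (-2Nη⁴)`, which is at most `δ` once `N ≥ (2/η⁴) log (2/δ)`.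
-/

open Finset Real unitInterval
open scoped NNReal ProbabilityTheory

lemma hellingerDist_nonneg {α : Type*} [Fintype α] (P Q : α → ℝ) : 0 ≤ hellingerDist P Q := by
  unfold hellingerDist
  positivity

lemma half_one_add_one_sub_sq_sq_mem_Icc {d : ℝ} (hd0 : 0 ≤ d) (hd1 : d ≤ 1) :
    (1 / 2) * (1 + (1 - d ^ 2) ^ 2) ∈ Set.Icc (1 - d ^ 2) 1 := by
  have hd2 : d ^ 2 ≤ 1 := pow_le_one₀ hd0 hd1
  constructor <;> nlinarith

lemma bernoulliMeasure_eq_ber {p : ℝ} (hp : p ∈ I) :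
    bernoulliMeasure p = Ber(true, false, ⟨p, hp⟩) := by
  rw [bernoulliMeasure, ProbabilityTheory.bernoulliMeasure_def]
  congr 2 <;> rw [ENNReal.ofReal] <;> congr <;> ext <;> simp [hp.1, hp.2]

/-- Hoeffding's inequality for the number of successes in independent Bernoulli trials. -/
lemma measureReal_le_card_mul_sub_card_true_le {ι : Type*} [Fintype ι] (p : I) {ε : ℝ}
    (hε : 0 ≤ ε) :
    (Measure.pi fun _ : ι => Ber(true, false, p)).real
        {ω | ε ≤ Fintype.card ι * p - #{i | ω i = true}} ≤
      exp (-2 * ε ^ 2 / Fintype.card ι) := by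
  set μ := Measure.pi fun _ : ι => Ber(true, false, p)
  set X : ι → (ι → Bool) → ℝ := fun i ω => p - if ω i = true then 1 else 0
  have hindep : ProbabilityTheory.iIndepFun X μ :=
    ProbabilityTheory.iIndepFun_pi (X := fun _ b => (p : ℝ) - if b = true then 1 else 0)
      fun _ => .of_discrete
  have hsubG : ∀ i ∈ univ,
      ProbabilityTheory.HasSubgaussianMGF (X i) ((‖(p : ℝ) - (p - 1)‖₊ / 2) ^ 2) μ := by
    intro i _
    refine ProbabilityTheory.hasSubgaussianMGF_of_mem_Icc_of_integral_eq_zero .of_discrete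
      (ae_of_all _ fun ω => ?_) ?_
    · by_cases h : ω i = true <;> simp [X, h]
    · rw [integral_comp_eval (X := fun _ => Bool) (i := i)
        (f := fun b : Bool => (p : ℝ) - if b = true then 1 else 0) .of_discrete,
        ProbabilityTheory.integral_bernoulliMeasure]
      simp only [↓reduceIte, smul_eq_mul, Bool.false_eq_true, sub_zero]
      ring
  calc _ = μ.real {ω | ε ≤ ∑ i, X i ω} := by
        congr; ext ω
        simp [X, sum_sub_distrib, sum_boole]
    _ ≤ exp (-ε ^ 2 / (2 * ((∑ _ : ι, (‖(p : ℝ) - (p - 1)‖₊ / 2) ^ 2 : ℝ≥0) : ℝ))) :=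
        ProbabilityTheory.HasSubgaussianMGF.measure_sum_ge_le_of_iIndepFun hindep hsubG hε
    _ = exp (-2 * ε ^ 2 / Fintype.card ι) := by
        simp only [sub_sub_cancel, nnnorm_one, sum_const, card_univ, nsmul_eq_mul]
        push_cast
        ring_nf

lemma one_sub_exp_le_measureReal_le_card_true_div {N : ℕ} (hN : 0 < N) (p : I) {a : ℝ}
    (ha : a ≤ p) :
    1 - exp (-2 * N * ((p : ℝ) - a) ^ 2) ≤
      (Measure.pi fun _ : Fin N => Ber(true, false, p)).real {ω | a ≤ #{i | ω i = true} / N} := by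
  have hNpos : (0 : ℝ) < N := Nat.cast_pos.2 hN
  have hsub : {ω : Fin N → Bool | a ≤ #{i | ω i = true} / N}ᶜ ⊆
      {ω | N * ((p : ℝ) - a) ≤ Fintype.card (Fin N) * p - #{i | ω i = true}} := by
    intro ω hω
    simp only [Set.mem_compl_iff, Set.mem_ofPred_eq, not_le, div_lt_iff₀ hNpos] at hω
    simp only [Set.mem_ofPred_eq, Fintype.card_fin]
    linarith
  have htail := (measureReal_mono hsub).trans
    (measureReal_le_card_mul_sub_card_true_le (ι := Fin N) p
      (mul_nonneg hNpos.le (sub_nonneg.2 ha)))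
  rw [probReal_compl_eq_one_sub (.of_discrete)] at htail
  calc 1 - exp (-2 * N * ((p : ℝ) - a) ^ 2)
      = 1 - exp (-2 * (N * (p - a)) ^ 2 / Fintype.card (Fin N)) := by
        rw [Fintype.card_fin]; field_simp
    _ ≤ _ := by linarith

theorem completeness_probabilistic_core_general {α : Type*} [Fintype α]
    (D DC : α → ℝ)
    (η : ℝ) (hη : η ∈ Set.Ioc (0 : ℝ) 1) (hclose : hellingerDist D DC ≤ η)
    (δ : ℝ) (hδ : δ ∈ Set.Ioo (0 : ℝ) 1)
    (q : ℝ) (hq : q = (1 / 2) * (1 + (1 - hellingerDist D DC ^ 2) ^ 2))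
    (N : ℕ) (hN : (N : ℝ) ≥ (2 / η ^ 4) * Real.log (2 / δ)) :
    (Measure.pi fun _ : Fin N => bernoulliMeasure q)
        {ω | ((Finset.univ.filter fun i => ω i = true).card : ℝ) / N ≥
          1 - 2 * η ^ 2} ≥ ENNReal.ofReal (1 - δ) := by
  obtain ⟨hη0, hη1⟩ := hη
  obtain ⟨hδ0, hδ1⟩ := hδ
  have hd0 := hellingerDist_nonneg D DC
  obtain ⟨hq_lower, hq_upper⟩ := hq ▸ half_one_add_one_sub_sq_sq_mem_Icc hd0 (hclose.trans hη1)
  have hq_mem : q ∈ I := ⟨by nlinarith, hq_upper⟩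
  have hgap : η ^ 2 ≤ q - (1 - 2 * η ^ 2) := by nlinarith
  have hlog : 0 < log (2 / δ) := log_pos (by rw [lt_div_iff₀ hδ0]; linarith)
  have hNpos : 0 < N := by
    have : 0 < (2 / η ^ 4) * log (2 / δ) := by positivity
    exact_mod_cast this.trans_le hN
  have hexp : exp (-2 * N * (q - (1 - 2 * η ^ 2)) ^ 2) ≤ δ := by
    have hN' : 2 * log (2 / δ) ≤ N * η ^ 4 := by
      rwa [ge_iff_le, div_mul_eq_mul_div, div_le_iff₀ (by positivity)] at hN
    calc exp (-2 * N * (q - (1 - 2 * η ^ 2)) ^ 2) ≤ exp (-log (2 / δ)) := by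
          gcongr; nlinarith [pow_le_pow_left₀ (by positivity) hgap 2]
      _ = δ / 2 := by rw [exp_neg, exp_log (by positivity), inv_div]
      _ ≤ δ := by linarith
  rw [bernoulliMeasure_eq_ber hq_mem, ge_iff_le, ← ofReal_measureReal]
  exact ENNReal.ofReal_le_ofReal <| (by linarith : 1 - δ ≤ 1 - exp _).trans
    (one_sub_exp_le_measureReal_le_card_true_div hNpos ⟨q, hq_mem⟩ (by simp only; linarith))

/-- Probabilistic core of the completeness of Theorem 4.4: the honest prover,
who forwards the state purifying `D` with `d_H(D, D_C) ≤ η`, passes the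
verifier's acceptance test (empirical mean of the Bernoulli swap-test outcomes
at least `1 − 2η²`) with probability at least `1 − δ`, provided
`N ≥ (2/η⁴)·log(2/δ)`. -/
theorem completeness_probabilistic_core {α : Type*} [Fintype α]
    (D DC : α → ℝ)
    (hD0 : ∀ x, 0 ≤ D x) (hDC0 : ∀ x, 0 ≤ DC x)
    (hD1 : ∑ x, D x = 1) (hDC1 : ∑ x, DC x = 1)
    (η : ℝ) (hη : η ∈ Set.Ioc (0 : ℝ) 1) (hclose : hellingerDist D DC ≤ η)
    (δ : ℝ) (hδ : δ ∈ Set.Ioo (0 : ℝ) 1)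
    (q : ℝ) (hq : q = (1 / 2) * (1 + (1 - hellingerDist D DC ^ 2) ^ 2))
    (N : ℕ) (hN : (N : ℝ) ≥ (2 / η ^ 4) * Real.log (2 / δ)) :
    (Measure.pi fun _ : Fin N => bernoulliMeasure q)
        {ω | ((Finset.univ.filter fun i => ω i = true).card : ℝ) / N ≥
          1 - 2 * η ^ 2} ≥ ENNReal.ofReal (1 - δ) :=
  completeness_probabilistic_core_general D DC η hη hclose δ hδ q hq N hN
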